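/- For any two probability measures P and Q on a common measurable space, the total variation distance satisfies d_TV(P,Q) ≤ √(1 − exp(−D_KL(P‖Q))). -/

import Mathlib

open MeasureTheory ENNReal Classical

/-- Total variation distance between two measures, as a supremum over
measurable sets. -/
noncomputable def tvDist {α : Type*} [MeasurableSpace α] (P Q : Measure α) : ℝ :=
  ⨆ A : {A : Set α // MeasurableSet A}, |(P A.1).toReal - (Q A.1).toReal|

/-- Kullback–Leibler divergence `D_KL(P‖Q)`, defined as `∫ log (dP/dQ) dP` when
`P ≪ Q` (and this log-likelihood ratio is integrable), and `+∞` otherwise. -/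
noncomputable def klDiv {α : Type*} [MeasurableSpace α] (P Q : Measure α) : ℝ≥0∞ :=
  if P ≪ Q ∧ Integrable (llr P Q) P then ENNReal.ofReal (∫ x, llr P Q x ∂P) else ∞

/-- `exp (-t)` for an extended nonnegative real `t`, with `exp (-∞) = 0`. -/
noncomputable def expNeg (t : ℝ≥0∞) : ℝ :=
  if t = ∞ then 0 else Real.exp (-t.toReal)

section aux

variable {α : Type*} [MeasurableSpace α] (P Q : Measure α)
  [IsProbabilityMeasure P] [IsProbabilityMeasure Q]

lemma tvDist_le_of_forall {c : ℝ}
    (h : ∀ A : Set α, MeasurableSet A → |(P A).toReal - (Q A).toReal| ≤ c) :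
    tvDist P Q ≤ c := by
  have : Nonempty {A : Set α // MeasurableSet A} := ⟨⟨∅, MeasurableSet.empty⟩⟩
  exact ciSup_le fun A => h A.1 A.2

lemma tvDist_le_one : tvDist P Q ≤ 1 := by
  refine tvDist_le_of_forall P Q fun A hA => abs_le.2 ⟨?_, ?_⟩
  · have h1 : (P A).toReal ≥ 0 := ENNReal.toReal_nonneg
    have h2 : (Q A).toReal ≤ 1 := by
      simpa using ENNReal.toReal_mono one_ne_top (prob_le_one (μ := Q) (s := A))
    linarith
  · have h1 : (Q A).toReal ≥ 0 := ENNReal.toReal_nonneg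
    have h2 : (P A).toReal ≤ 1 := by
      simpa using ENNReal.toReal_mono one_ne_top (prob_le_one (μ := P) (s := A))
    linarith

end aux

/-- **Bretagnolle–Huber inequality**: for any two probability measures `P` and
`Q`, `d_TV(P,Q) ≤ √(1 − exp (−D_KL(P‖Q)))`. -/
theorem bretagnolle_huber {α : Type*} [MeasurableSpace α] (P Q : Measure α)
    [IsProbabilityMeasure P] [IsProbabilityMeasure Q] :
    tvDist P Q ≤ Real.sqrt (1 - expNeg (klDiv P Q)) := by
  by_cases hPQ : P ≪ Q ∧ Integrable (llr P Q) P
  swap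
  · rw [klDiv, if_neg hPQ]
    simpa [expNeg] using tvDist_le_one P Q
  obtain ⟨hac, hint⟩ := hPQ
  set k : ℝ := ∫ x, llr P Q x ∂P with hk
  set ρ : α → ℝ := fun x => (P.rnDeriv Q x).toReal with hρ
  have hρ_meas : Measurable ρ := (Measure.measurable_rnDeriv P Q).ennreal_toReal
  have hρ_nonneg : ∀ x, 0 ≤ ρ x := fun x => ENNReal.toReal_nonneg
  have hρ_int : Integrable ρ Q := Measure.integrable_toReal_rnDeriv
  have hρ_int_one : ∫ x, ρ x ∂Q = 1 := by
    rw [hρ]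
    simp [Measure.integral_toReal_rnDeriv hac]
  -- the "min" function and its integral m
  set m : ℝ := ∫ x, min (ρ x) 1 ∂Q with hm
  have hmin_nonneg : ∀ x, 0 ≤ min (ρ x) 1 := fun x => le_min (hρ_nonneg x) one_pos.le
  have hmin_int : Integrable (fun x => min (ρ x) 1) Q := by
    refine Integrable.mono' (integrable_const 1) ?_ ?_
    · exact ((hρ_meas.min measurable_const)).aestronglyMeasurable
    · filter_upwards with x
      rw [Real.norm_of_nonneg (hmin_nonneg x)]
      exact min_le_right _ _
  have hm_nonneg : 0 ≤ m := integral_nonneg hmin_nonneg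
  have hm_le_one : m ≤ 1 := by
    have := integral_mono hmin_int (integrable_const 1) (fun x => min_le_right _ _)
    simpa using this
  -- the "max" function
  have hmax_int : Integrable (fun x => max (ρ x) 1) Q := by
    have : (fun x => max (ρ x) 1) = fun x => ρ x + 1 - min (ρ x) 1 := by
      funext x
      have := min_add_max (ρ x) 1
      linarith
    rw [this]
    exact (hρ_int.add (integrable_const 1)).sub hmin_int
  have hmax_integral : ∫ x, max (ρ x) 1 ∂Q = 2 - m := by
    have heq : (fun x => max (ρ x) 1) = fun x => ρ x + 1 - min (ρ x) 1 := by
      funext x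
      have := min_add_max (ρ x) 1
      linarith
    have h1 : Integrable (fun x => ρ x + 1) Q := hρ_int.add (integrable_const 1)
    rw [heq, integral_sub h1 hmin_int, integral_add hρ_int (integrable_const 1), hρ_int_one]
    simp only [integral_const, measure_univ, probReal_univ, ENNReal.toReal_one, smul_eq_mul, one_mul, ← hm]
    ring
  -- Step 1: tvDist ≤ 1 - m
  have h_tv : tvDist P Q ≤ 1 - m := by
    refine tvDist_le_of_forall P Q fun A hA => ?_
    have hPA : ∫ x in A, ρ x ∂Q = (P A).toReal :=
      Measure.setIntegral_toReal_rnDeriv hac A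
    have hQA : ∫ x in A, (1 : ℝ) ∂Q = (Q A).toReal := by
      simp [Measure.restrict_apply_univ, measureReal_def]
    have h_int_diff : Integrable (fun x => ρ x - min (ρ x) 1) Q := hρ_int.sub hmin_int
    have h_int_diff' : Integrable (fun x => 1 - min (ρ x) 1) Q :=
      (integrable_const 1).sub hmin_int
    have hbound : ∫ x, (ρ x - min (ρ x) 1) ∂Q = 1 - m := by
      rw [integral_sub hρ_int hmin_int, hρ_int_one, ← hm]
    have hbound' : ∫ x, (1 - min (ρ x) 1) ∂Q = 1 - m := by
      rw [integral_sub (integrable_const 1) hmin_int, ← hm]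
      simp
    rw [abs_le]
    constructor
    · -- Q A - P A ≤ 1 - m, i.e. -(1-m) ≤ P A - Q A
      have h1 : (Q A).toReal - (P A).toReal = ∫ x in A, (1 - ρ x) ∂Q := by
        rw [integral_sub (integrableOn_const (C := (1:ℝ)) (measure_ne_top _ _))
          hρ_int.integrableOn, hPA, hQA]
      have h2 : ∫ x in A, (1 - ρ x) ∂Q ≤ ∫ x in A, (1 - min (ρ x) 1) ∂Q := by
        refine setIntegral_mono ((integrable_const 1).sub hρ_int).integrableOn
          h_int_diff'.integrableOn fun x => ?_
        have := min_le_left (ρ x) 1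
        simp only
        linarith
      have h3 : ∫ x in A, (1 - min (ρ x) 1) ∂Q ≤ 1 - m := by
        rw [← hbound']
        refine setIntegral_le_integral h_int_diff' ?_
        filter_upwards with x
        have := min_le_right (ρ x) 1
        simp only [Pi.zero_apply]
        linarith
      linarith
    · -- P A - Q A ≤ 1 - m
      have h1 : (P A).toReal - (Q A).toReal = ∫ x in A, (ρ x - 1) ∂Q := by
        rw [integral_sub hρ_int.integrableOn
          (integrableOn_const (measure_ne_top _ _)), hPA, hQA]
      have h2 : ∫ x in A, (ρ x - 1) ∂Q ≤ ∫ x in A, (ρ x - min (ρ x) 1) ∂Q := by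
        refine setIntegral_mono (hρ_int.sub (integrable_const 1)).integrableOn
          h_int_diff.integrableOn fun x => ?_
        have := min_le_right (ρ x) 1
        simp only
        linarith
      have h3 : ∫ x in A, (ρ x - min (ρ x) 1) ∂Q ≤ 1 - m := by
        rw [← hbound]
        refine setIntegral_le_integral h_int_diff ?_
        filter_upwards with x
        have := min_le_left (ρ x) 1
        simp only [Pi.zero_apply]
        linarith
      linarith
  -- Step 2: Cauchy–Schwarz : ∫ √ρ dQ ≤ √m * √(2-m)
  have hρ1_int : Integrable (fun x => ρ x + 1) Q := hρ_int.add (integrable_const 1)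
  have hsqrt_le : ∀ x, Real.sqrt (ρ x) ≤ ρ x + 1 := by
    intro x
    rcases le_total (ρ x) 1 with h | h
    · have h1 : Real.sqrt (ρ x) ≤ 1 := by
        rw [show (1:ℝ) = Real.sqrt 1 by simp]
        exact Real.sqrt_le_sqrt h
      linarith [hρ_nonneg x]
    · have h1 : 1 ≤ Real.sqrt (ρ x) := by
        rw [show (1:ℝ) = Real.sqrt 1 by simp]
        exact Real.sqrt_le_sqrt h
      have h2 : Real.sqrt (ρ x) ≤ ρ x := by
        nlinarith [Real.sq_sqrt (hρ_nonneg x)]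
      linarith
  have hsqrt_int : Integrable (fun x => Real.sqrt (ρ x)) Q := by
    refine Integrable.mono' hρ1_int (hρ_meas.sqrt).aestronglyMeasurable ?_
    filter_upwards with x
    rw [Real.norm_of_nonneg (Real.sqrt_nonneg _)]
    exact hsqrt_le x
  have hCS : ∫ x, Real.sqrt (ρ x) ∂Q ≤ m ^ (1/2 : ℝ) * (2 - m) ^ (1/2 : ℝ) := by
    set u : α → ℝ := fun x => Real.sqrt (min (ρ x) 1) with hu
    set v : α → ℝ := fun x => Real.sqrt (max (ρ x) 1) with hv
    have huv : ∀ x, u x * v x = Real.sqrt (ρ x) := by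
      intro x
      rw [hu, hv]
      simp only
      rw [← Real.sqrt_mul (hmin_nonneg x), min_mul_max, mul_one]
    have hu2 : ∀ x, u x ^ (2:ℝ) = min (ρ x) 1 := by
      intro x
      rw [hu, Real.rpow_two, Real.sq_sqrt (hmin_nonneg x)]
    have hv2 : ∀ x, v x ^ (2:ℝ) = max (ρ x) 1 := by
      intro x
      rw [hv, Real.rpow_two, Real.sq_sqrt (le_max_of_le_right one_pos.le)]
    have humem : MemLp u (ENNReal.ofReal 2) Q := by
      refine MemLp.mono_exponent ?_ le_top
      refine memLp_top_of_bound ((hρ_meas.min measurable_const).sqrt).aestronglyMeasurable 1 ?_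
      filter_upwards with x
      rw [hu, Real.norm_of_nonneg (Real.sqrt_nonneg _)]
      exact Real.sqrt_le_one.2 (min_le_right _ _)
    have hvmem : MemLp v (ENNReal.ofReal 2) Q := by
      have h2 : ENNReal.ofReal 2 = (2 : ℝ≥0∞) := by norm_num
      rw [h2]
      refine (memLp_two_iff_integrable_sq
        ((hρ_meas.max measurable_const).sqrt).aestronglyMeasurable).2 ?_
      have : (fun x => v x ^ (2:ℕ)) = fun x => max (ρ x) 1 := by
        funext x
        rw [hv]
        simp only
        rw [Real.sq_sqrt (le_max_of_le_right one_pos.le)]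
      rw [this]
      exact hmax_int
    have := integral_mul_le_Lp_mul_Lq_of_nonneg (Real.HolderConjugate.two_two)
      (Filter.Eventually.of_forall fun x => Real.sqrt_nonneg _)
      (Filter.Eventually.of_forall fun x => Real.sqrt_nonneg _) humem hvmem
    calc ∫ x, Real.sqrt (ρ x) ∂Q = ∫ x, u x * v x ∂Q := by
          exact integral_congr_ae (Filter.Eventually.of_forall fun x => (huv x).symm)
      _ ≤ (∫ x, u x ^ (2:ℝ) ∂Q) ^ (1/2 : ℝ) * (∫ x, v x ^ (2:ℝ) ∂Q) ^ (1/2 : ℝ) := this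
      _ = m ^ (1/2 : ℝ) * (2 - m) ^ (1/2 : ℝ) := by
          have hIu : (∫ x, u x ^ (2:ℝ) ∂Q) = m := by
            rw [integral_congr_ae (Filter.Eventually.of_forall fun x => hu2 x)]
          have hIv : (∫ x, v x ^ (2:ℝ) ∂Q) = 2 - m := by
            rw [integral_congr_ae (Filter.Eventually.of_forall fun x => hv2 x)]
            exact hmax_integral
          rw [hIu, hIv]
  have hmul : ∀ x, ρ x * (Real.sqrt (ρ x))⁻¹ = Real.sqrt (ρ x) := by
    intro x
    rcases eq_or_lt_of_le (hρ_nonneg x) with h | h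
    · rw [← h]; simp
    · have hs := Real.sqrt_pos.2 h
      field_simp
      exact (Real.sq_sqrt h.le).symm
  -- Step 3: Jensen : exp (-(k/2)) ≤ ∫ √ρ dQ
  have hJensen : Real.exp (-(k/2)) ≤ ∫ x, Real.sqrt (ρ x) ∂Q := by
    set g : α → ℝ := fun x => -(1/2 : ℝ) * llr P Q x with hg
    have hg_int : Integrable g P := hint.const_mul _
    have hg_integral : ∫ x, g x ∂P = -(k/2) := by
      rw [hg, integral_const_mul, ← hk]
      ring
    have h_exp_eq : (fun x => Real.exp (g x)) =ᵐ[P] fun x => (Real.sqrt (ρ x))⁻¹ := by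
      filter_upwards [Measure.rnDeriv_pos hac, hac.ae_le (Measure.rnDeriv_lt_top P Q)]
        with x hpos hlt
      have hρpos : 0 < ρ x := ENNReal.toReal_pos hpos.ne' hlt.ne
      show Real.exp (-(1/2 : ℝ) * Real.log (ρ x)) = (Real.sqrt (ρ x))⁻¹
      rw [show -(1/2 : ℝ) * Real.log (ρ x) = -Real.log (Real.sqrt (ρ x)) by
            rw [Real.log_sqrt (hρ_nonneg x)]; ring,
        Real.exp_neg, Real.exp_log (Real.sqrt_pos.2 hρpos)]
    have h_inv_int : Integrable (fun x => (Real.sqrt (ρ x))⁻¹) P := by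
      rw [← integrable_rnDeriv_smul_iff hac]
      have : (fun x => (P.rnDeriv Q x).toReal • (Real.sqrt (ρ x))⁻¹)
          = fun x => Real.sqrt (ρ x) := by
        funext x
        show ρ x * (Real.sqrt (ρ x))⁻¹ = Real.sqrt (ρ x)
        exact hmul x
      rw [this]
      exact hsqrt_int
    have h_exp_int : Integrable (fun x => Real.exp (g x)) P :=
      h_inv_int.congr h_exp_eq.symm
    have hJ : Real.exp (∫ x, g x ∂P) ≤ ∫ x, Real.exp (g x) ∂P := by
      refine ConvexOn.map_integral_le convexOn_exp Real.continuous_exp.continuousOn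
        isClosed_univ ?_ hg_int h_exp_int
      filter_upwards with x
      trivial
    rw [hg_integral] at hJ
    calc Real.exp (-(k/2)) ≤ ∫ x, Real.exp (g x) ∂P := hJ
      _ = ∫ x, (Real.sqrt (ρ x))⁻¹ ∂P := integral_congr_ae h_exp_eq
      _ = ∫ x, Real.sqrt (ρ x) ∂Q := by
          rw [← integral_rnDeriv_smul hac]
          refine integral_congr_ae (Filter.Eventually.of_forall fun x => ?_)
          show ρ x * (Real.sqrt (ρ x))⁻¹ = Real.sqrt (ρ x)
          exact hmul x
  -- Step 4: combine
  have h_exp_le : Real.exp (-k) ≤ m * (2 - m) := by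
    have h1 : Real.exp (-k) = Real.exp (-(k/2)) ^ 2 := by
      rw [sq, ← Real.exp_add]
      congr 1
      ring
    have h2 : (0:ℝ) ≤ ∫ x, Real.sqrt (ρ x) ∂Q :=
      integral_nonneg fun x => Real.sqrt_nonneg _
    have h3 : Real.exp (-(k/2)) ^ 2 ≤ (m ^ (1/2:ℝ) * (2-m) ^ (1/2:ℝ)) ^ 2 := by
      refine pow_le_pow_left₀ (Real.exp_pos _).le (hJensen.trans hCS) 2
    have h4 : (m ^ (1/2:ℝ) * (2-m) ^ (1/2:ℝ)) ^ 2 = m * (2 - m) := by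
      rw [mul_pow, ← Real.rpow_natCast (m ^ (1/2:ℝ)) 2, ← Real.rpow_natCast ((2-m) ^ (1/2:ℝ)) 2,
        ← Real.rpow_mul hm_nonneg, ← Real.rpow_mul (by linarith : (0:ℝ) ≤ 2 - m)]
      norm_num
    linarith
  have hk_nonneg : 0 ≤ k := by
    by_contra h
    push_neg at h
    have : 1 < Real.exp (-k) := by
      rw [← Real.exp_zero]
      exact Real.exp_lt_exp.2 (by linarith)
    nlinarith
  have hRHS : expNeg (klDiv P Q) = Real.exp (-k) := by
    rw [klDiv, if_pos ⟨hac, hint⟩, expNeg, if_neg ofReal_ne_top, ← hk,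
      ENNReal.toReal_ofReal hk_nonneg]
  rw [hRHS]
  calc tvDist P Q ≤ 1 - m := h_tv
    _ = Real.sqrt ((1 - m)^2) := by
        rw [Real.sqrt_sq (by linarith)]
    _ ≤ Real.sqrt (1 - Real.exp (-k)) := by
        refine Real.sqrt_le_sqrt ?_
        nlinarith
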